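/- Let H be a real inner product space, d, u₁, u₂, y₂ ∈ H with u₁ = d + y₂, u₁ ≠ 0, u₂ ≠ 0, y₂ ≠ 0, and suppose ⟨u₁, u₂⟩/(‖u₁‖·‖u₂‖) − ⟨y₂, u₂⟩/(‖y₂‖·‖u₂‖) ≥ ε̄ for some ε̄ > 0. If additionally ‖u₂‖ ≤ L·‖u₁‖ for some L ≥ 0, then ‖u₁‖ + ‖u₂‖ ≤ (2(1 + L)/ε̄)·‖d‖. -/

import Mathlib

/-!
Writing `x̂ = ‖x‖⁻¹ • x`, the phase condition reads `⟪û₁ - ŷ₂, û₂⟫ ≥ ε`, so Cauchy–Schwarz gives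
`ε ≤ ‖û₁ - ŷ₂‖`. Scaling by `‖u₁‖`, `‖u₁ - ‖u₁‖ • ŷ₂‖ ≤ ‖u₁ - y₂‖ + |‖y₂‖ - ‖u₁‖| ≤ 2 ‖d‖`,
hence `‖u₁‖ ≤ (2 / ε) ‖d‖`; the gain bound on `u₂` contributes the factor `1 + L`.
-/

open RealInnerProductSpace NormedSpace

section Normalize

variable {V : Type*} [NormedAddCommGroup V] [NormedSpace ℝ V]

lemma norm_normalize_le_one (x : V) : ‖normalize x‖ ≤ 1 := by
  by_cases hx : x = 0
  · simp [hx]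
  · exact (norm_normalize hx).le

lemma norm_sub_norm_smul_normalize_le (x y : V) : ‖x - ‖x‖ • normalize y‖ ≤ 2 * ‖x - y‖ := by
  have hsplit : x - ‖x‖ • normalize y = (x - y) + (‖y‖ - ‖x‖) • normalize y := by
    rw [sub_smul, norm_smul_normalize]
    abel
  have hrescale : ‖(‖y‖ - ‖x‖) • normalize y‖ ≤ ‖x - y‖ :=
    calc ‖(‖y‖ - ‖x‖) • normalize y‖ ≤ |‖y‖ - ‖x‖| * 1 := by
          rw [norm_smul, Real.norm_eq_abs]
          gcongr
          exact norm_normalize_le_one y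
      _ ≤ ‖x - y‖ := by rw [mul_one, abs_sub_comm]; exact abs_norm_sub_norm_le x y
  calc ‖x - ‖x‖ • normalize y‖ ≤ ‖x - y‖ + ‖(‖y‖ - ‖x‖) • normalize y‖ := by
        rw [hsplit]; exact norm_add_le _ _
    _ ≤ 2 * ‖x - y‖ := by linarith

lemma norm_mul_norm_normalize_sub_normalize_le (x y : V) :
    ‖x‖ * ‖normalize x - normalize y‖ ≤ 2 * ‖x - y‖ :=
  calc ‖x‖ * ‖normalize x - normalize y‖ = ‖‖x‖ • (normalize x - normalize y)‖ := by
        rw [norm_smul, norm_norm]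
    _ = ‖x - ‖x‖ • normalize y‖ := by rw [smul_sub, norm_smul_normalize]
    _ ≤ 2 * ‖x - y‖ := norm_sub_norm_smul_normalize_le x y

end Normalize

section InnerProduct

variable {H : Type*} [NormedAddCommGroup H] [InnerProductSpace ℝ H]

lemma inner_div_norm_mul_norm_sub_eq_inner_normalize (x y z : H) :
    ⟪x, z⟫ / (‖x‖ * ‖z‖) - ⟪y, z⟫ / (‖y‖ * ‖z‖) = ⟪normalize x - normalize y, normalize z⟫ := by
  simp only [NormedSpace.normalize, inner_sub_left, real_inner_smul_left, real_inner_smul_right]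
  ring

lemma inner_normalize_le_norm (v w : H) : ⟪v, normalize w⟫ ≤ ‖v‖ :=
  calc ⟪v, normalize w⟫ ≤ ‖v‖ * ‖normalize w‖ := real_inner_le_norm v _
    _ ≤ ‖v‖ * 1 := by gcongr; exact norm_normalize_le_one w
    _ = ‖v‖ := mul_one _

theorem norm_le_of_phase_gap {x y z : H} {ε : ℝ} (hε : 0 < ε)
    (h : ε ≤ ⟪x, z⟫ / (‖x‖ * ‖z‖) - ⟪y, z⟫ / (‖y‖ * ‖z‖)) :
    ‖x‖ ≤ 2 / ε * ‖x - y‖ := by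
  rw [inner_div_norm_mul_norm_sub_eq_inner_normalize] at h
  have hgap : ε * ‖x‖ ≤ 2 * ‖x - y‖ :=
    calc ε * ‖x‖ ≤ ‖normalize x - normalize y‖ * ‖x‖ := by
          gcongr; exact h.trans (inner_normalize_le_norm _ z)
      _ ≤ 2 * ‖x - y‖ := by
          rw [mul_comm]; exact norm_mul_norm_normalize_sub_normalize_le x y
  rw [div_mul_eq_mul_div, le_div_iff₀ hε]
  linarith

end InnerProduct

theorem small_phase_combined_bound_general {H : Type*} [NormedAddCommGroup H]
    [InnerProductSpace ℝ H] (d u₁ u₂ y₂ : H)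
    (hfb : u₁ = d + y₂)
    (ε : ℝ) (hε : 0 < ε)
    (h : ⟪u₁, u₂⟫ / (‖u₁‖ * ‖u₂‖) - ⟪y₂, u₂⟫ / (‖y₂‖ * ‖u₂‖) ≥ ε)
    (L : ℝ) (hL : 0 ≤ L) (hgain : ‖u₂‖ ≤ L * ‖u₁‖) :
    ‖u₁‖ + ‖u₂‖ ≤ (2 * (1 + L) / ε) * ‖d‖ := by
  have hd : u₁ - y₂ = d := by rw [hfb, add_sub_cancel_right]
  have hu₁ : ‖u₁‖ ≤ 2 / ε * ‖d‖ := hd ▸ norm_le_of_phase_gap hε h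
  calc ‖u₁‖ + ‖u₂‖ ≤ (1 + L) * ‖u₁‖ := by linarith
    _ ≤ (1 + L) * (2 / ε * ‖d‖) := by gcongr
    _ = (2 * (1 + L) / ε) * ‖d‖ := by ring

theorem small_phase_combined_bound {H : Type*} [NormedAddCommGroup H]
    [InnerProductSpace ℝ H] (d u₁ u₂ y₂ : H)
    (hfb : u₁ = d + y₂) (hu₁ : u₁ ≠ 0) (hu₂ : u₂ ≠ 0) (hy₂ : y₂ ≠ 0)
    (ε : ℝ) (hε : 0 < ε)
    (h : ⟪u₁, u₂⟫ / (‖u₁‖ * ‖u₂‖) - ⟪y₂, u₂⟫ / (‖y₂‖ * ‖u₂‖) ≥ ε)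
    (L : ℝ) (hL : 0 ≤ L) (hgain : ‖u₂‖ ≤ L * ‖u₁‖) :
    ‖u₁‖ + ‖u₂‖ ≤ (2 * (1 + L) / ε) * ‖d‖ :=
  small_phase_combined_bound_general d u₁ u₂ y₂ hfb ε hε h L hL hgain
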